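/- arXiv:2604.10602 — 2 statements merged into one kernel-verified Lean document; each statement's English description precedes it below -/
import Mathlib

section
/- Let ν ∈ [0,1) and let c₁ > 0, r > 0, α > 0. Then the series ∑_{j=1}^∞ j^ν / (1 + c₁ r^α j)² converges, and there is a constant C (depending on ν and c₁ but not on r) such that ∑_{j=1}^∞ j^ν / (1 + c₁ r^α j)² ≤ C · r^{−α(ν+1)} for all r ∈ (0, 1]. -/
open Set Real

-- key pointwise estimate
private lemma key_est (ν : ℝ) (hν0 : 0 ≤ ν) (hν1 : ν < 1) {t x : ℝ} (ht : 0 < t) (hx : 1 ≤ x) :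
    x ^ ν / (1 + t * x) ^ 2 ≤
      (4 / (1 - ν)) * t ^ (-(1 + ν)) *
        ((1 + t * x) ^ (ν - 1) - (1 + t * (x + 1)) ^ (ν - 1)) := by
  set s : ℝ := 1 - ν with hs
  have hs0 : 0 < s := by simp [hs]; linarith
  have hs1 : s ≤ 1 := by simp [hs]; linarith
  set a : ℝ := 1 + t * x with ha
  set b : ℝ := 1 + t * (x + 1) with hb
  have hx0 : 0 < x := lt_of_lt_of_le one_pos hx
  have ha0 : 0 < a := by positivity
  have hba : b = a + t := by rw [ha, hb]; ring
  have hb0 : 0 < b := by rw [hba]; positivity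
  have hab : a ≤ b := by rw [hba]; linarith
  have hta : t ≤ a := by
    have : t ≤ t * x := le_mul_of_one_le_right ht.le hx
    rw [ha]; linarith
  have hb2a : b ≤ 2 * a := by rw [hba]; linarith
  have has : (0:ℝ) < a ^ s := rpow_pos_of_pos ha0 s
  have hbs : (0:ℝ) < b ^ s := rpow_pos_of_pos hb0 s
  -- Bernoulli: (a/b)^s ≤ 1 + s*(a/b - 1)
  have hbern : (a / b) ^ s ≤ 1 + s * (a / b - 1) := by
    have h := rpow_one_add_le_one_add_mul_self (s := a / b - 1) (p := s)
      (by have : 0 < a / b := div_pos ha0 hb0; linarith) hs0.le hs1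
    simpa using h
  have h1' : a ^ s * b ≤ (b - s * t) * b ^ s := by
    have hdiv : a ^ s / b ^ s ≤ (b - s * t) / b := by
      rw [← div_rpow ha0.le hb0.le]
      calc (a / b) ^ s ≤ 1 + s * (a / b - 1) := hbern
        _ = (b - s * t) / b := by field_simp; rw [hba]; ring
    rw [div_le_div_iff₀ hbs hb0] at hdiv
    linarith
  have hasbs : a ^ s ≤ b ^ s := rpow_le_rpow ha0.le hab hs0.le
  -- step 1
  have step1 : s * t * b ^ (ν - 2) ≤ a ^ (ν - 1) - b ^ (ν - 1) := by
    have hA : a ^ (ν - 1) = (a ^ s)⁻¹ := by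
      rw [show ν - 1 = -s by rw [hs]; ring, rpow_neg ha0.le]
    have hB : b ^ (ν - 1) = (b ^ s)⁻¹ := by
      rw [show ν - 1 = -s by rw [hs]; ring, rpow_neg hb0.le]
    have hB2 : b ^ (ν - 2) = (b ^ s * b)⁻¹ := by
      rw [show ν - 2 = -(s + 1) by rw [hs]; ring, rpow_neg hb0.le, rpow_add hb0, rpow_one]
    rw [hA, hB, hB2]
    have hsub : (a ^ s)⁻¹ - (b ^ s)⁻¹ = (b ^ s - a ^ s) / (a ^ s * b ^ s) := by
      field_simp
    rw [hsub, mul_inv_le_iff₀ (by positivity), div_mul_eq_mul_div, le_div_iff₀ (by positivity)]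
    nlinarith [mul_le_mul_of_nonneg_right h1' hbs.le,
      mul_le_mul_of_nonneg_left hasbs (mul_pos (mul_pos hs0 ht) hbs).le]
  -- step 2
  have step2 : x ^ ν / a ^ 2 ≤ 4 * t ^ (-ν) * b ^ (ν - 2) := by
    have hb2 : b ^ (ν - 2) = b ^ ν / b ^ 2 := by
      rw [← rpow_natCast b 2, ← rpow_sub hb0]
      norm_num
    have hrhs : 4 * t ^ (-ν) * b ^ (ν - 2) = 4 * b ^ ν / (t ^ ν * b ^ 2) := by
      rw [hb2, rpow_neg ht.le]
      field_simp
    rw [hrhs, div_le_div_iff₀ (by positivity) (by positivity)]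
    have h1 : x ^ ν * t ^ ν = (t * x) ^ ν := by
      rw [← mul_rpow hx0.le ht.le]; ring_nf
    have h2 : (t * x) ^ ν ≤ a ^ ν := by
      apply rpow_le_rpow (by positivity) (by rw [ha]; linarith) hν0
    have h3 : a ^ ν ≤ b ^ ν := rpow_le_rpow ha0.le hab hν0
    have h4 : b ^ 2 ≤ 4 * a ^ 2 := by
      calc b ^ 2 ≤ (2 * a) ^ 2 := pow_le_pow_left₀ hb0.le hb2a 2
        _ = 4 * a ^ 2 := by ring
    calc x ^ ν * (t ^ ν * b ^ 2) = (t * x) ^ ν * b ^ 2 := by rw [← h1]; ring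
      _ ≤ a ^ ν * (4 * a ^ 2) := by
          apply mul_le_mul h2 h4 (by positivity) (by positivity)
      _ ≤ 4 * b ^ ν * a ^ 2 := by
          have h5 := mul_le_mul_of_nonneg_right h3 (by positivity : (0:ℝ) ≤ 4 * a ^ 2)
          linarith
  -- combine
  have heq : (4 / (1 - ν)) * t ^ (-(1 + ν)) * (s * t * b ^ (ν - 2))
      = 4 * t ^ (-ν) * b ^ (ν - 2) := by
    have ht1 : t ^ (-(1 + ν)) * t = t ^ (-ν) := by
      nth_rewrite 2 [← rpow_one t]
      rw [← rpow_add ht]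
      norm_num
    have hne : (1:ℝ) - ν ≠ 0 := by intro h; linarith [h]
    have hKs : 4 / (1 - ν) * s = 4 := by rw [hs]; field_simp
    calc (4 / (1 - ν)) * t ^ (-(1 + ν)) * (s * t * b ^ (ν - 2))
        = (4 / (1 - ν) * s) * ((t ^ (-(1 + ν)) * t) * b ^ (ν - 2)) := by ring
      _ = 4 * t ^ (-ν) * b ^ (ν - 2) := by rw [hKs, ht1]; ring
  calc x ^ ν / a ^ 2 ≤ 4 * t ^ (-ν) * b ^ (ν - 2) := step2
    _ = (4 / (1 - ν)) * t ^ (-(1 + ν)) * (s * t * b ^ (ν - 2)) := heq.symm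
    _ ≤ (4 / (1 - ν)) * t ^ (-(1 + ν)) * (a ^ (ν - 1) - b ^ (ν - 1)) := by
        apply mul_le_mul_of_nonneg_left step1 (by positivity)

private lemma aux_sum (ν : ℝ) (hν0 : 0 ≤ ν) (hν1 : ν < 1) {t : ℝ} (ht : 0 < t) :
    Summable (fun j : ℕ => ((j:ℝ)+1) ^ ν / (1 + t * ((j:ℝ)+1)) ^ 2) ∧
      (∑' j : ℕ, ((j:ℝ)+1) ^ ν / (1 + t * ((j:ℝ)+1)) ^ 2) ≤ (4 / (1 - ν)) * t ^ (-(1+ν)) := by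
  set f : ℕ → ℝ := fun j => ((j:ℝ)+1) ^ ν / (1 + t * ((j:ℝ)+1)) ^ 2 with hf
  set G : ℕ → ℝ := fun n => (4 / (1 - ν)) * t ^ (-(1+ν)) * (1 + t * ((n:ℝ)+1)) ^ (ν - 1) with hG
  have hfnn : ∀ j, 0 ≤ f j := fun j => by
    have : (0:ℝ) < 1 + t * ((j:ℝ)+1) := by positivity
    positivity
  have hkey : ∀ j : ℕ, f j ≤ G j - G (j+1) := by
    intro j
    have h := key_est ν hν0 hν1 ht (x := (j:ℝ)+1) (by norm_num)
    simp only [hf, hG]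
    push_cast
    rw [← mul_sub]
    convert h using 3 <;> push_cast <;> ring
  have hGnn : ∀ n, 0 ≤ G n := by
    intro n
    have h1 : (0:ℝ) < 1 + t * ((n:ℝ)+1) := by positivity
    have h2 : 0 < (4 / (1 - ν)) := by
      have h3 : 0 < 1 - ν := by linarith
      positivity
    positivity
  have hpartial : ∀ N : ℕ, ∑ j ∈ Finset.range N, f j ≤ (4 / (1 - ν)) * t ^ (-(1+ν)) := by
    intro N
    calc ∑ j ∈ Finset.range N, f j ≤ ∑ j ∈ Finset.range N, (G j - G (j+1)) :=
          Finset.sum_le_sum fun j _ => hkey j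
      _ = G 0 - G N := Finset.sum_range_sub' G N
      _ ≤ G 0 := by linarith [hGnn N]
      _ ≤ (4 / (1 - ν)) * t ^ (-(1+ν)) := by
          rw [hG]
          simp only [Nat.cast_zero, zero_add, mul_one]
          have h1 : (1 + t) ^ (ν - 1) ≤ 1 :=
            rpow_le_one_of_one_le_of_nonpos (by linarith) (by linarith)
          have h2 : (0:ℝ) ≤ (4 / (1 - ν)) * t ^ (-(1+ν)) := by
            have h3 : 0 < 1 - ν := by linarith
            positivity
          calc (4 / (1 - ν)) * t ^ (-(1+ν)) * (1 + t) ^ (ν - 1)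
              ≤ (4 / (1 - ν)) * t ^ (-(1+ν)) * 1 :=
                mul_le_mul_of_nonneg_left h1 h2
            _ = (4 / (1 - ν)) * t ^ (-(1+ν)) := by ring
  exact ⟨summable_of_sum_range_le hfnn hpartial, tsum_le_of_sum_range_le hfnn hpartial⟩

theorem stmt5 (ν c₁ α : ℝ) (hν0 : 0 ≤ ν) (hν1 : ν < 1) (hc : 0 < c₁) (hα : 0 < α) :
    (∀ r : ℝ, 0 < r →
      Summable (fun j : ℕ => ((j:ℝ)+1) ^ ν / (1 + c₁ * r ^ α * ((j:ℝ)+1)) ^ 2)) ∧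
    ∃ C : ℝ, 0 < C ∧ ∀ r ∈ Ioc (0:ℝ) 1,
      (∑' j : ℕ, ((j:ℝ)+1) ^ ν / (1 + c₁ * r ^ α * ((j:ℝ)+1)) ^ 2)
        ≤ C * r ^ (-(α * (ν + 1))) := by
  constructor
  · intro r hr
    exact (aux_sum ν hν0 hν1 (mul_pos hc (rpow_pos_of_pos hr α))).1
  · refine ⟨(4 / (1 - ν)) * c₁ ^ (-(1+ν)), ?_, ?_⟩
    · have h1 : 0 < 1 - ν := by linarith
      positivity
    · rintro r ⟨hr0, hr1⟩
      have ht : 0 < c₁ * r ^ α := mul_pos hc (rpow_pos_of_pos hr0 α)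
      have h := (aux_sum ν hν0 hν1 ht).2
      have heq : (c₁ * r ^ α) ^ (-(1+ν)) = c₁ ^ (-(1+ν)) * r ^ (-(α * (ν+1))) := by
        rw [mul_rpow hc.le (rpow_pos_of_pos hr0 α).le,
          ← rpow_mul hr0.le, show α * (-(1+ν)) = -(α * (ν+1)) by ring]
      calc (∑' j : ℕ, ((j:ℝ)+1) ^ ν / (1 + c₁ * r ^ α * ((j:ℝ)+1)) ^ 2)
          ≤ (4 / (1 - ν)) * (c₁ * r ^ α) ^ (-(1+ν)) := h
        _ = (4 / (1 - ν)) * c₁ ^ (-(1+ν)) * r ^ (-(α * (ν+1))) := by rw [heq]; ring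
end

section
/- Suppose a sequence of eigenvalues (λ_j) satisfies c₁ j ≤ λ_j ≤ c₂ j for all j ≥ 1, with 0 < c₁ ≤ c₂. Let ν ∈ [0,1) and suppose |s_j(r)| ≤ C r^{α−1} (1 + λ_j r^α)^{−1} for each j and all r > 0. Then ∑_{j=1}^∞ λ_j^ν |s_j(r)|² ≤ C' r^{α(1−ν)−2} for all r ∈ (0,1], for some constant C' independent of r. -/
open Set

namespace Stmt7Aux
open Real


lemma aux_tel {p : ℝ} (hp0 : 0 < p) (hp1 : p ≤ 1) (x : ℝ) (hx : 1 ≤ x) :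
    p * (x+1) ^ (-p-1) ≤ x ^ (-p) - (x+1) ^ (-p) := by
  have hx0 : 0 < x := lt_of_lt_of_le one_pos hx
  have hx1 : 0 < x + 1 := by linarith
  set t : ℝ := (x+1)⁻¹ with ht
  have ht0 : 0 < t := by positivity
  have ht1 : t ≤ 1 := by
    rw [ht]; rw [inv_le_one_iff₀]; right; linarith
  -- Bernoulli : (1 - t)^p ≤ 1 - p*t
  have hb : (1 + (-t)) ^ p ≤ 1 + p * (-t) :=
    rpow_one_add_le_one_add_mul_self (by linarith) hp0.le hp1
  have h1t : (1 : ℝ) + (-t) = x / (x+1) := by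
    rw [ht]; field_simp; ring
  have hkey : 1 + p * t ≤ ((x+1)/x) ^ p := by
    have hpos : (0:ℝ) < (x / (x+1)) ^ p := rpow_pos_of_pos (by positivity) _
    have h2 : (x/(x+1)) ^ p * (1 + p * t) ≤ 1 := by
      calc (x/(x+1)) ^ p * (1 + p * t) ≤ (1 - p*t) * (1 + p*t) := by
            apply mul_le_mul_of_nonneg_right _ (by positivity)
            rw [← h1t]; linarith [hb]
        _ = 1 - (p*t)^2 := by ring
        _ ≤ 1 := by nlinarith [sq_nonneg (p*t)]
    have h3 : ((x+1)/x) ^ p = ((x/(x+1)) ^ p)⁻¹ := by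
      rw [show (x+1)/x = (x/(x+1))⁻¹ by rw [inv_div]]
      exact Real.inv_rpow (by positivity) p
    rw [h3, ← one_div, le_div_iff₀ hpos]
    linarith [h2]
  -- multiply both sides by (x+1)^(-p)
  have hmul : (x+1) ^ (-p) * (1 + p * t) ≤ (x+1) ^ (-p) * ((x+1)/x) ^ p :=
    mul_le_mul_of_nonneg_left hkey (by positivity)
  have hr1 : (x+1) ^ (-p) * ((x+1)/x) ^ p = x ^ (-p) := by
    rw [Real.div_rpow (by positivity) hx0.le, Real.rpow_neg hx1.le]
    field_simp [Real.rpow_neg hx0.le, ne_of_gt (rpow_pos_of_pos hx0 p),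
      ne_of_gt (rpow_pos_of_pos hx1 p)]
    rw [← Real.rpow_add hx0, add_neg_cancel, Real.rpow_zero]
  have hr2 : (x+1) ^ (-p) * (1 + p * t) = (x+1)^(-p) + p * (x+1)^(-p-1) := by
    rw [ht, mul_add, mul_one]
    have : (x+1) ^ (-p-1) = (x+1)^(-p) * (x+1)⁻¹ := by
      rw [show -p-1 = -p + (-1) by ring, Real.rpow_add hx1, Real.rpow_neg_one]
    rw [this]; ring
  rw [hr2, hr1] at hmul
  linarith

lemma tail_sum {p : ℝ} (hp0 : 0 < p) (hp1 : p ≤ 1) (N : ℕ) (hN : 1 ≤ N) :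
    ∑' j : ℕ, ((N:ℝ)+(j:ℝ)+1) ^ (-p-1) ≤ (N:ℝ) ^ (-p) / p := by
  have hN0 : (0:ℝ) < N := by exact_mod_cast hN
  apply Real.tsum_le_of_sum_range_le
  · intro j
    positivity
  · intro n
    have key : ∀ j : ℕ, ((N:ℝ)+(j:ℝ)+1) ^ (-p-1)
        ≤ (((N:ℝ)+(j:ℝ)) ^ (-p) - ((N:ℝ)+(j+1:ℕ):ℝ) ^ (-p)) / p := by
      intro j
      rw [le_div_iff₀ hp0]
      have := aux_tel hp0 hp1 ((N:ℝ)+(j:ℝ))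
        (le_add_of_le_of_nonneg (by exact_mod_cast hN) (Nat.cast_nonneg j))
      have e : ((N:ℝ)+((j+1:ℕ):ℝ)) = (N:ℝ)+(j:ℝ)+1 := by push_cast; ring
      rw [e]
      linarith [this]
    calc ∑ j ∈ Finset.range n, ((N:ℝ)+(j:ℝ)+1) ^ (-p-1)
        ≤ ∑ j ∈ Finset.range n,
            ((((N:ℝ)+(j:ℝ)) ^ (-p) - ((N:ℝ)+((j+1:ℕ)):ℝ) ^ (-p)) / p) :=
          Finset.sum_le_sum (fun j _ => key j)
      _ = (∑ j ∈ Finset.range n,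
            (((N:ℝ)+(j:ℝ)) ^ (-p) - ((N:ℝ)+((j+1:ℕ)):ℝ) ^ (-p))) / p := by
          rw [Finset.sum_div]
      _ = (((N:ℝ)+((0:ℕ):ℝ)) ^ (-p) - ((N:ℝ)+(n:ℝ)) ^ (-p)) / p := by
          rw [Finset.sum_range_sub' (fun j : ℕ => ((N:ℝ)+(j:ℝ)) ^ (-p))]
      _ ≤ (N:ℝ) ^ (-p) / p := by
          have hb : (0:ℝ) ≤ ((N:ℝ)+(n:ℝ)) ^ (-p) := by positivity
          simp only [Nat.cast_zero, add_zero]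
          rw [div_le_div_iff_of_pos_right hp0]
          linarith

lemma key_sum {ν : ℝ} (hν0 : 0 ≤ ν) (hν1 : ν < 1) {a M : ℝ} (ha : 0 < a) (haM : a ≤ M) :
    Summable (fun j : ℕ => ((j:ℝ)+1)^ν * ((1 + a*((j:ℝ)+1))^2)⁻¹) ∧
    ∑' j : ℕ, ((j:ℝ)+1)^ν * ((1 + a*((j:ℝ)+1))^2)⁻¹
      ≤ ((1+M)^(1+ν) + (1-ν)⁻¹) * a^(-(1+ν)) := by
  have hM : 0 < M := lt_of_lt_of_le ha haM
  set g : ℕ → ℝ := fun j => ((j:ℝ)+1)^ν * ((1 + a*((j:ℝ)+1))^2)⁻¹ with hg_def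
  have hn0 : ∀ j : ℕ, (0:ℝ) < (j:ℝ)+1 := fun j => by positivity
  have hg_nonneg : ∀ j, 0 ≤ g j := fun j => by
    have := hn0 j; positivity
  -- summable comparison sequence
  have hsum2 : Summable (fun j : ℕ => ((j:ℝ)+1)^(ν-2)) := by
    have h1 : Summable (fun n : ℕ => (n:ℝ)^(ν-2)) :=
      Real.summable_nat_rpow.mpr (by linarith)
    have h2 := (summable_nat_add_iff 1).mpr h1
    exact h2.congr (fun n => by push_cast; ring_nf)
  -- pointwise bound for the tail
  have hg_le : ∀ j : ℕ, g j ≤ a⁻¹^2 * ((j:ℝ)+1)^(ν-2) := by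
    intro j
    set n : ℝ := (j:ℝ)+1 with hn_def
    have hn : 0 < n := hn0 j
    have h1 : ((1 + a*n)^2)⁻¹ ≤ ((a*n)^2)⁻¹ := by
      apply inv_anti₀ (by positivity)
      apply pow_le_pow_left₀ (by positivity)
      linarith
    have h2 : n^ν * ((a*n)^2)⁻¹ = a⁻¹^2 * n^(ν-2) := by
      have hpow : n^(ν-2) = n^ν * (n^2)⁻¹ := by
        rw [show ν-2 = ν + (-2) by ring, Real.rpow_add hn, Real.rpow_neg hn.le,
          show ((2:ℝ):ℝ) = ((2:ℕ):ℝ) by norm_num, Real.rpow_natCast]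
      rw [hpow, mul_pow, mul_inv, inv_pow]
      ring
    calc g j ≤ n^ν * ((a*n)^2)⁻¹ :=
          mul_le_mul_of_nonneg_left h1 (by positivity)
      _ = a⁻¹^2 * n^(ν-2) := h2
  have hg : Summable g :=
    Summable.of_nonneg_of_le hg_nonneg hg_le (hsum2.mul_left _)
  refine ⟨hg, ?_⟩
  -- split at N = ⌈a⁻¹⌉₊
  set N : ℕ := ⌈a⁻¹⌉₊ with hN_def
  have hN1 : 1 ≤ N := Nat.one_le_iff_ne_zero.mpr (by
    simp [hN_def, Nat.ceil_eq_zero, not_le]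
    positivity)
  have hNpos : (0:ℝ) < N := by exact_mod_cast hN1
  have h_le : a⁻¹ ≤ (N:ℝ) := Nat.le_ceil _
  have h_up : (N:ℝ) ≤ a⁻¹ * (1+M) := by
    have h1 : (N:ℝ) < a⁻¹ + 1 := Nat.ceil_lt_add_one (by positivity)
    have h2 : 1 ≤ a⁻¹ * M := by
      rw [inv_mul_eq_div, le_div_iff₀ ha]
      linarith
    nlinarith
  rw [← hg.sum_add_tsum_nat_add N]
  -- head bound
  have head : ∑ i ∈ Finset.range N, g i ≤ (1+M)^(1+ν) * a^(-(1+ν)) := by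
    have hterm : ∀ i ∈ Finset.range N, g i ≤ (N:ℝ)^ν := by
      intro i hi
      have hiN : (i:ℝ)+1 ≤ (N:ℝ) := by
        have := Finset.mem_range.mp hi
        exact_mod_cast Nat.succ_le_of_lt this
      calc g i ≤ ((i:ℝ)+1)^ν * 1 := by
            apply mul_le_mul_of_nonneg_left _ (by positivity)
            apply inv_le_one_of_one_le₀
            nlinarith [mul_pos ha (hn0 i)]
        _ = ((i:ℝ)+1)^ν := mul_one _
        _ ≤ (N:ℝ)^ν := Real.rpow_le_rpow (by positivity) hiN hν0
    calc ∑ i ∈ Finset.range N, g i ≤ ∑ _i ∈ Finset.range N, (N:ℝ)^ν :=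
          Finset.sum_le_sum hterm
      _ = (N:ℝ) * (N:ℝ)^ν := by
          rw [Finset.sum_const, Finset.card_range, nsmul_eq_mul]
      _ = (N:ℝ)^(1+ν) := by
          rw [Real.rpow_add hNpos, Real.rpow_one]
      _ ≤ (a⁻¹ * (1+M))^(1+ν) :=
          Real.rpow_le_rpow (by positivity) h_up (by linarith)
      _ = (1+M)^(1+ν) * a^(-(1+ν)) := by
          rw [Real.mul_rpow (by positivity) (by linarith),
            Real.inv_rpow ha.le, ← Real.rpow_neg ha.le]
          ring
  -- tail bound
  have tail : ∑' i : ℕ, g (i + N) ≤ (1-ν)⁻¹ * a^(-(1+ν)) := by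
    have hshift : Summable (fun i : ℕ => a⁻¹^2 * ((N:ℝ)+(i:ℝ)+1)^(ν-2)) := by
      apply Summable.mul_left
      have := (summable_nat_add_iff N).mpr hsum2
      exact this.congr (fun i => by push_cast; ring_nf)
    have hpt : ∀ i : ℕ, g (i + N) ≤ a⁻¹^2 * ((N:ℝ)+(i:ℝ)+1)^(ν-2) := by
      intro i
      have := hg_le (i + N)
      have e : (((i+N:ℕ)):ℝ)+1 = (N:ℝ)+(i:ℝ)+1 := by push_cast; ring
      rwa [e] at this
    have htel : ∑' i : ℕ, ((N:ℝ)+(i:ℝ)+1)^(ν-2) ≤ (N:ℝ)^(ν-1)/(1-ν) := by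
      have h := tail_sum (p := 1-ν) (by linarith) (by linarith) N hN1
      have e1 : ∑' i : ℕ, ((N:ℝ)+(i:ℝ)+1)^(ν-2)
          = ∑' i : ℕ, ((N:ℝ)+(i:ℝ)+1)^(-(1-ν)-1) :=
        tsum_congr (fun i => by congr 1; ring)
      have e2 : (N:ℝ)^(-(1-ν)) = (N:ℝ)^(ν-1) := by congr 1; ring
      rw [e1, ← e2]
      exact h
    have hsum_tail : Summable (fun i : ℕ => ((N:ℝ)+(i:ℝ)+1)^(ν-2)) := by
      have := (summable_nat_add_iff N).mpr hsum2
      exact this.congr (fun i => by push_cast; ring_nf)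
    calc ∑' i : ℕ, g (i + N) ≤ ∑' i : ℕ, a⁻¹^2 * ((N:ℝ)+(i:ℝ)+1)^(ν-2) :=
          Summable.tsum_le_tsum hpt ((summable_nat_add_iff N).mpr hg) hshift
      _ = a⁻¹^2 * ∑' i : ℕ, ((N:ℝ)+(i:ℝ)+1)^(ν-2) := tsum_mul_left
      _ ≤ a⁻¹^2 * ((N:ℝ)^(ν-1)/(1-ν)) := by
          apply mul_le_mul_of_nonneg_left htel (by positivity)
      _ ≤ a⁻¹^2 * (a^(1-ν)/(1-ν)) := by
          have hNle : (N:ℝ)^(ν-1) ≤ a^(1-ν) := by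
            have h := Real.rpow_le_rpow_of_nonpos (by positivity : (0:ℝ) < a⁻¹)
              h_le (by linarith : ν-1 ≤ 0)
            rwa [Real.inv_rpow ha.le, ← Real.rpow_neg ha.le,
              show -(ν-1) = 1-ν by ring] at h
          apply mul_le_mul_of_nonneg_left _ (by positivity)
          rw [div_le_div_iff_of_pos_right (by linarith : (0:ℝ) < 1-ν)]
          exact hNle
      _ = (1-ν)⁻¹ * a^(-(1+ν)) := by
          have ha2 : a⁻¹^2 = a^((-2):ℝ) := by
            rw [Real.rpow_neg ha.le, show ((2:ℝ)) = ((2:ℕ):ℝ) by norm_num,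
              Real.rpow_natCast, inv_pow]
          rw [ha2, div_eq_mul_inv, ← mul_assoc, ← Real.rpow_add ha,
            show (-2:ℝ)+(1-ν) = -(1+ν) by ring, mul_comm]
  linarith [head, tail]

end Stmt7Aux

open Stmt7Aux Real in
theorem stmt7 (lam : ℕ → ℝ) (s : ℝ → ℕ → ℝ) (c₁ c₂ C ν α : ℝ)
    (hc₁ : 0 < c₁) (hc₁₂ : c₁ ≤ c₂)
    (hlam : ∀ j : ℕ, c₁ * ((j:ℝ)+1) ≤ lam j ∧ lam j ≤ c₂ * ((j:ℝ)+1))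
    (hν0 : 0 ≤ ν) (hν1 : ν < 1) (hα : 0 < α) (hC : 0 < C)
    (hs : ∀ j : ℕ, ∀ r : ℝ, 0 < r →
      |s r j| ≤ C * r ^ (α - 1) * (1 + lam j * r ^ α)⁻¹) :
    ∃ C' : ℝ, 0 < C' ∧ ∀ r ∈ Ioc (0:ℝ) 1,
      Summable (fun j : ℕ => lam j ^ ν * (s r j) ^ 2) ∧
      (∑' j : ℕ, lam j ^ ν * (s r j) ^ 2) ≤ C' * r ^ (α * (1 - ν) - 2) := by
  have hc₂ : 0 < c₂ := lt_of_lt_of_le hc₁ hc₁₂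
  set K : ℝ := (1+c₁)^(1+ν) + (1-ν)⁻¹ with hK_def
  have hK : 0 < K := by
    have h1 := Real.rpow_pos_of_pos (by linarith : (0:ℝ) < 1+c₁) (1+ν)
    have h2 : (0:ℝ) < (1-ν)⁻¹ := inv_pos.mpr (by linarith)
    rw [hK_def]; linarith
  refine ⟨C^2 * c₂^ν * (K * c₁^(-(1+ν))), ?_, ?_⟩
  · have h1 := Real.rpow_pos_of_pos hc₂ ν
    have h2 := Real.rpow_pos_of_pos hc₁ (-(1+ν))
    positivity
  intro r hr
  obtain ⟨hr0, hr1⟩ := hr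
  set a : ℝ := c₁ * r^α with ha_def
  have hrα : 0 < r^α := rpow_pos_of_pos hr0 α
  have ha : 0 < a := mul_pos hc₁ hrα
  have haM : a ≤ c₁ := by
    have h1 : r^α ≤ 1 := Real.rpow_le_one hr0.le hr1 hα.le
    nlinarith
  obtain ⟨hgsum, hgle⟩ := key_sum hν0 hν1 ha haM
  set D : ℝ := C^2 * (r^(α-1))^2 * c₂^ν with hD_def
  have hD : 0 ≤ D := by positivity
  -- pointwise bound
  have h_pt : ∀ j : ℕ, lam j ^ ν * s r j ^ 2
      ≤ D * (((j:ℝ)+1)^ν * ((1 + a*((j:ℝ)+1))^2)⁻¹) := by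
    intro j
    have hn : (0:ℝ) < (j:ℝ)+1 := by positivity
    obtain ⟨hl1, hl2⟩ := hlam j
    have hlam_pos : 0 < lam j := lt_of_lt_of_le (by positivity) hl1
    have h1 : lam j ^ ν ≤ c₂^ν * ((j:ℝ)+1)^ν := by
      rw [← Real.mul_rpow hc₂.le hn.le]
      exact Real.rpow_le_rpow hlam_pos.le hl2 hν0
    have h3 : (1 + lam j * r^α)⁻¹ ≤ (1 + a*((j:ℝ)+1))⁻¹ := by
      apply inv_anti₀ (by positivity)
      have : a * ((j:ℝ)+1) = (c₁ * ((j:ℝ)+1)) * r^α := by rw [ha_def]; ring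
      rw [this]
      nlinarith
    have h2 : s r j ^ 2 ≤ C^2 * (r^(α-1))^2 * ((1 + a*((j:ℝ)+1))^2)⁻¹ := by
      have hb : |s r j| ≤ C * r^(α-1) * (1 + a*((j:ℝ)+1))⁻¹ := by
        refine le_trans (hs j r hr0) ?_
        apply mul_le_mul_of_nonneg_left h3 (by positivity)
      calc s r j ^ 2 = |s r j|^2 := (sq_abs _).symm
        _ ≤ (C * r^(α-1) * (1 + a*((j:ℝ)+1))⁻¹)^2 :=
            pow_le_pow_left₀ (abs_nonneg _) hb 2
        _ = C^2 * (r^(α-1))^2 * ((1 + a*((j:ℝ)+1))^2)⁻¹ := by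
            rw [mul_pow, mul_pow, inv_pow]
    calc lam j ^ ν * s r j ^ 2
        ≤ (c₂^ν * ((j:ℝ)+1)^ν) * (C^2 * (r^(α-1))^2 * ((1 + a*((j:ℝ)+1))^2)⁻¹) :=
          mul_le_mul h1 h2 (sq_nonneg _) (by positivity)
      _ = D * (((j:ℝ)+1)^ν * ((1 + a*((j:ℝ)+1))^2)⁻¹) := by rw [hD_def]; ring
  have h_nonneg : ∀ j : ℕ, 0 ≤ lam j ^ ν * s r j ^ 2 := by
    intro j
    obtain ⟨hl1, _⟩ := hlam j
    have hlam_pos : 0 < lam j := lt_of_lt_of_le (by positivity) hl1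
    exact mul_nonneg (Real.rpow_nonneg hlam_pos.le ν) (sq_nonneg _)
  have hsummable : Summable (fun j : ℕ => lam j ^ ν * s r j ^ 2) :=
    Summable.of_nonneg_of_le h_nonneg h_pt (hgsum.mul_left D)
  refine ⟨hsummable, ?_⟩
  calc ∑' j : ℕ, lam j ^ ν * s r j ^ 2
      ≤ ∑' j : ℕ, D * (((j:ℝ)+1)^ν * ((1 + a*((j:ℝ)+1))^2)⁻¹) :=
        Summable.tsum_le_tsum h_pt hsummable (hgsum.mul_left D)
    _ = D * ∑' j : ℕ, ((j:ℝ)+1)^ν * ((1 + a*((j:ℝ)+1))^2)⁻¹ := tsum_mul_left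
    _ ≤ D * (K * a^(-(1+ν))) := mul_le_mul_of_nonneg_left hgle hD
    _ = C^2 * c₂^ν * (K * c₁^(-(1+ν))) * r^(α * (1-ν) - 2) := by
        have e1 : a^(-(1+ν)) = c₁^(-(1+ν)) * r^(α*(-(1+ν))) := by
          rw [ha_def, Real.mul_rpow hc₁.le hrα.le, ← Real.rpow_mul hr0.le]
        have e2 : (r^(α-1))^2 = r^((α-1)*2) := by
          rw [← Real.rpow_natCast (r^(α-1)) 2, ← Real.rpow_mul hr0.le]
          norm_num
        have e3 : r^((α-1)*2) * r^(α*(-(1+ν))) = r^(α*(1-ν)-2) := by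
          rw [← Real.rpow_add hr0]; congr 1; ring
        rw [hD_def, e1, e2, ← e3]; ring
end
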